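/- arXiv:2104.02774 — 3 statements merged into one kernel-verified Lean document; each statement's English description precedes it below -/
import Mathlib

section
/- Let N ≥ 2 and T ≥ 1 be integers with ln N < 2T, and let r_{i,t} ∈ [0,1] be arbitrary real rewards for i ∈ {1,…,N} and t ∈ {1,…,T}. Set ε = (1 − √(ln N/(2T)))^{-1}. Define weights w_1(i) = 1 and w_{t+1}(i) = w_t(i)·ε^{r_{i,t}} for t = 1,…,T−1, and probability vectors p_t(i) = w_t(i)/Σ_{j=1}^N w_t(j). Then max_{1≤i≤N} Σ_{t=1}^T r_{i,t} − Σ_{t=1}^T Σ_{i=1}^N p_t(i)·r_{i,t} ≤ 2√2·√(T·ln N). -/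
/-!
Hedge with parameter `ε > 1` is analysed through the potential `Φₜ = ∑ⱼ ε^{Gⱼ(t)}`, where
`Gⱼ(t)` is the cumulative reward of action `j` before time `t`. Since `ε^x ≤ 1 + (ε - 1) x`
on `[0, 1]`, one round multiplies `Φ` by at most `1 + (ε - 1) gₜ ≤ exp ((ε - 1) gₜ)`, where
`gₜ` is the algorithm's expected reward. Comparing `Φ_T ≤ N exp ((ε - 1) ∑ gₜ)` with
`ε^{Gᵢ(T)} ≤ Φ_T` gives `Gᵢ(T) log ε ≤ log N + (ε - 1) ∑ gₜ`. For `ε = (1 - δ)⁻¹` we have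
`log ε ≥ δ` and `(ε - 1)(1 - δ) = δ`, so the regret is at most `log N / δ + δ T`, which for
`δ = √(log N / 2T)` equals `3 √(T log N / 2) ≤ 2√2 √(T log N)`.
-/

open Finset Real

namespace Hedge

variable {ι : Type*} (s : Finset ι) (ε : ℝ) (r : ι → ℕ → ℝ)

def cumReward (i : ι) (t : ℕ) : ℝ := ∑ u ∈ range t, r i u

noncomputable def potential (t : ℕ) : ℝ := ∑ j ∈ s, ε ^ cumReward r j t

noncomputable def prob (i : ι) (t : ℕ) : ℝ := ε ^ cumReward r i t / potential s ε r t

noncomputable def expectedReward (t : ℕ) : ℝ := ∑ j ∈ s, prob s ε r j t * r j t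

variable {s ε r}

lemma cumReward_succ (i : ι) (t : ℕ) : cumReward r i (t + 1) = cumReward r i t + r i t :=
  sum_range_succ _ _

lemma eq_rpow_cumReward {T : ℕ} {i : ι} {w : ℕ → ℝ} (hε : 0 < ε) (h0 : w 0 = 1)
    (hsucc : ∀ t, t + 1 < T → w (t + 1) = w t * ε ^ r i t) :
    ∀ t < T, w t = ε ^ cumReward r i t
  | 0, _ => by simp [h0, cumReward]
  | t + 1, ht => by
    rw [hsucc t ht, eq_rpow_cumReward hε h0 hsucc t (by omega), cumReward_succ, rpow_add hε]

lemma potential_zero : potential s ε r 0 = #s := by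
  simp [potential, cumReward]

lemma rpow_cumReward_le_potential (hε : 0 ≤ ε) {i : ι} (hi : i ∈ s) (t : ℕ) :
    ε ^ cumReward r i t ≤ potential s ε r t :=
  single_le_sum (f := fun j => ε ^ cumReward r j t) (fun _ _ => rpow_nonneg hε _) hi

lemma potential_mul_expectedReward (hε : 0 < ε) (t : ℕ) :
    potential s ε r t * expectedReward s ε r t
      = ∑ j ∈ s, ε ^ cumReward r j t * r j t := by
  rw [expectedReward, mul_sum]
  refine sum_congr rfl fun j hj => ?_
  have hΦ := (rpow_pos_of_pos hε _).trans_le (rpow_cumReward_le_potential (r := r) hε.le hj t)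
  rw [prob, ← mul_assoc, mul_div_cancel₀ _ hΦ.ne']

lemma potential_succ_le (hε : 0 < ε) {t : ℕ} (hr : ∀ j ∈ s, r j t ∈ Set.Icc 0 1) :
    potential s ε r (t + 1)
      ≤ potential s ε r t * exp ((ε - 1) * expectedReward s ε r t) := by
  calc potential s ε r (t + 1) = ∑ j ∈ s, ε ^ cumReward r j t * ε ^ r j t := by
        simp only [potential, cumReward_succ, rpow_add hε]
    _ ≤ ∑ j ∈ s, ε ^ cumReward r j t * (1 + (ε - 1) * r j t) := by
        gcongr with j hj
        have h :=
          rpow_one_add_le_one_add_mul_self (s := ε - 1) (by linarith) (hr j hj).1 (hr j hj).2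
        rwa [add_sub_cancel, mul_comm (r j t)] at h
    _ = potential s ε r t * (1 + (ε - 1) * expectedReward s ε r t) := by
        rw [mul_add, mul_one, mul_left_comm, potential_mul_expectedReward hε, potential, mul_sum,
          ← sum_add_distrib]
        exact sum_congr rfl fun j _ => by ring
    _ ≤ _ := by
        have hΦ : 0 ≤ potential s ε r t := sum_nonneg fun _ _ => (rpow_pos_of_pos hε _).le
        have := add_one_le_exp ((ε - 1) * expectedReward s ε r t)
        gcongr
        linarith

lemma potential_le_card_mul_exp (hε : 0 < ε) {T : ℕ}
    (hr : ∀ j ∈ s, ∀ t < T, r j t ∈ Set.Icc 0 1) :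
    potential s ε r T
      ≤ #s * exp ((ε - 1) * ∑ t ∈ range T, expectedReward s ε r t) := by
  induction T with
  | zero => simp [potential_zero]
  | succ T ih =>
    calc potential s ε r (T + 1)
        ≤ potential s ε r T * exp ((ε - 1) * expectedReward s ε r T) :=
          potential_succ_le hε fun j hj => hr j hj T (by omega)
      _ ≤ #s * exp ((ε - 1) * ∑ t ∈ range T, expectedReward s ε r t)
            * exp ((ε - 1) * expectedReward s ε r T) := by
          gcongr
          exact ih fun j hj t ht => hr j hj t (by omega)
      _ = _ := by rw [mul_assoc, ← exp_add, sum_range_succ, mul_add]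

lemma cumReward_mul_log_le (hε : 0 < ε) {T : ℕ} (hr : ∀ j ∈ s, ∀ t < T, r j t ∈ Set.Icc 0 1)
    {i : ι} (hi : i ∈ s) :
    cumReward r i T * log ε
      ≤ log #s + (ε - 1) * ∑ t ∈ range T, expectedReward s ε r t := by
  have hs : (0 : ℝ) < #s := by exact_mod_cast card_pos.2 ⟨i, hi⟩
  have h := log_le_log (rpow_pos_of_pos hε _)
    ((rpow_cumReward_le_potential hε.le hi T).trans (potential_le_card_mul_exp hε hr))
  rwa [log_rpow hε, log_mul hs.ne' (exp_pos _).ne', log_exp] at h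

lemma cumReward_le {T : ℕ} {i : ι} (hr : ∀ t < T, r i t ≤ 1) : cumReward r i T ≤ T := by
  simpa [cumReward] using sum_le_sum fun t ht => hr t (mem_range.1 ht)

lemma cumReward_nonneg {T : ℕ} {i : ι} (hr : ∀ t < T, 0 ≤ r i t) : 0 ≤ cumReward r i T :=
  sum_nonneg fun t ht => hr t (mem_range.1 ht)

lemma cumReward_sub_sum_expectedReward_le {δ : ℝ} (hδ0 : 0 < δ) (hδ1 : δ < 1) {T : ℕ}
    (hr : ∀ j ∈ s, ∀ t < T, r j t ∈ Set.Icc 0 1) {i : ι} (hi : i ∈ s) :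
    cumReward r i T - ∑ t ∈ range T, expectedReward s (1 - δ)⁻¹ r t
      ≤ log #s / δ + δ * T := by
  have h1δ : 0 < 1 - δ := by linarith
  have key := cumReward_mul_log_le (inv_pos.2 h1δ) hr hi
  set G := cumReward r i T
  set S := ∑ t ∈ range T, expectedReward s (1 - δ)⁻¹ r t
  have hG0 : 0 ≤ G := cumReward_nonneg fun t ht => (hr i hi t ht).1
  have hGT : G ≤ T := cumReward_le fun t ht => (hr i hi t ht).2
  have hL : 0 ≤ log #s := log_natCast_nonneg _
  have hlog : δ ≤ log (1 - δ)⁻¹ := by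
    rw [log_inv]
    linarith [log_le_sub_one_of_pos h1δ]
  have hgap : ((1 - δ)⁻¹ - 1) * (1 - δ) = δ := by field_simp; ring
  have hkey : G * (1 - δ) * log (1 - δ)⁻¹ ≤ log #s * (1 - δ) + δ * S :=
    calc _ = G * log (1 - δ)⁻¹ * (1 - δ) := by ring
      _ ≤ (log #s + ((1 - δ)⁻¹ - 1) * S) * (1 - δ) := mul_le_mul_of_nonneg_right key h1δ.le
      _ = _ := by rw [add_mul, mul_right_comm, hgap]
  have : δ * (G - S) ≤ log #s + δ ^ 2 * T := by
    nlinarith [mul_le_mul_of_nonneg_left hlog (mul_nonneg hG0 h1δ.le), mul_nonneg hL hδ0.le,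
      mul_le_mul_of_nonneg_left hGT (sq_nonneg δ)]
  rw [div_add' _ _ _ hδ0.ne', le_div_iff₀ hδ0]
  linear_combination this

lemma div_sqrt_add_sqrt_mul_le {L T : ℝ} (hL : 0 < L) (hT : 0 < T) :
    L / √(L / (2 * T)) + √(L / (2 * T)) * T ≤ 2 * √2 * √(T * L) := by
  set δ := √(L / (2 * T))
  have hδ : 0 < δ := by positivity
  have hδsq : δ ^ 2 = L / (2 * T) := sq_sqrt (by positivity)
  have hLδ : L / δ = 2 * T * δ := by
    rw [div_eq_iff hδ.ne']
    field_simp at hδsq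
    linarith
  have hrhs : 2 * √2 * √(T * L) = 4 * T * δ := by
    rw [show T * L = 2 * (T * δ) ^ 2 by rw [mul_pow, hδsq]; field_simp,
      sqrt_mul zero_le_two, sqrt_sq (by positivity)]
    linear_combination 2 * T * δ * mul_self_sqrt (zero_le_two : (0 : ℝ) ≤ 2)
  rw [hLδ, hrhs]
  linarith [mul_pos hT hδ]

end Hedge

open Hedge in
/-- Deterministic full-information guarantee of the Hedge (multiplicative weights)
algorithm: the cumulative expected reward of the probability vectors `p` built from
exponentially updated weights is within `2√2·√(T·ln N)` of the best single action. -/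
theorem hedge_regret_bound
    (N T : ℕ) (hN : 2 ≤ N) (hT : 1 ≤ T)
    (hlog : Real.log N < 2 * T)
    (r : ℕ → ℕ → ℝ)
    (hr : ∀ i < N, ∀ t < T, r i t ∈ Set.Icc (0 : ℝ) 1)
    (ε : ℝ) (hε : ε = (1 - Real.sqrt (Real.log N / (2 * T)))⁻¹)
    (w : ℕ → ℕ → ℝ)
    (hw0 : ∀ i < N, w i 0 = 1)
    (hwsucc : ∀ i < N, ∀ t, t + 1 < T → w i (t + 1) = w i t * ε ^ (r i t))
    (p : ℕ → ℕ → ℝ)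
    (hp : ∀ i < N, ∀ t < T, p i t = w i t / ∑ j ∈ Finset.range N, w j t) :
    (Finset.range N).sup' (by simp; omega) (fun i => ∑ t ∈ Finset.range T, r i t)
      - ∑ t ∈ Finset.range T, ∑ i ∈ Finset.range N, p i t * r i t
      ≤ 2 * Real.sqrt 2 * Real.sqrt (T * Real.log N) := by
  have hT0 : (0 : ℝ) < T := by exact_mod_cast hT
  have hL : 0 < log N := log_pos (by exact_mod_cast hN)
  have hδ0 : 0 < √(log N / (2 * T)) := by positivity
  have hδ1 : √(log N / (2 * T)) < 1 :=
    (sqrt_lt' one_pos).2 (by rwa [one_pow, div_lt_one (by positivity)])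
  have hε0 : 0 < ε := hε ▸ inv_pos.2 (by linarith)
  have hw : ∀ i < N, ∀ t < T, w i t = ε ^ cumReward r i t := fun i hi =>
    eq_rpow_cumReward hε0 (hw0 i hi) (hwsucc i hi)
  have hprob : ∀ t < T, ∀ i < N, p i t = prob (range N) ε r i t := by
    intro t ht i hi
    rw [hp i hi t ht, prob, potential, hw i hi t ht]
    exact congrArg _ (sum_congr rfl fun j hj => hw j (mem_range.1 hj) t ht)
  obtain ⟨i, hi, hmax⟩ :=
    exists_mem_eq_sup' (nonempty_range_iff.2 (by omega : N ≠ 0)) fun i => cumReward r i T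
  calc _ = cumReward r i T - ∑ t ∈ range T, expectedReward (range N) ε r t := by
        refine congrArg₂ _ hmax (sum_congr rfl fun t ht => sum_congr rfl fun j hj => ?_)
        rw [hprob t (mem_range.1 ht) j (mem_range.1 hj)]
    _ ≤ log N / √(log N / (2 * T)) + √(log N / (2 * T)) * T := by
        simpa [hε] using
          cumReward_sub_sum_expectedReward_le hδ0 hδ1 (fun j hj => hr j (mem_range.1 hj)) hi
    _ ≤ _ := div_sqrt_add_sqrt_mul_le hL hT0
end

section
/- Let N ≥ 1 be an integer, m > 0 a real number, and μ_i ∈ [0, m] for each i ∈ {1,…,N}. Let c_{i,t} ≥ 0 be real numbers for i ∈ {1,…,N} and t in an integer interval {τ, τ+1, …, τ'} with τ ≤ τ'. Let V = Σ_{t=τ}^{τ'−1} max_{1≤i≤N} |c_{i,t+1} − c_{i,t}| be the cumulative temporal variation over the batch, and suppose I* ∈ {1,…,N} satisfies Σ_{t=τ}^{τ'} μ_{I*}·c_{I*,t} = max_{1≤i≤N} Σ_{t=τ}^{τ'} μ_i·c_{i,t}. Then for every t ∈ {τ,…,τ'} and every i ∈ {1,…,N}, it holds that μ_i·c_{i,t}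 − μ_{I*}·c_{I*,t} ≤ 2·m·V. -/
open Finset

/-- Inequality (A.2): within one batch `{τ,…,τ'}`, the per-time gap between the best
time-varying action and the best single action `I*` of the batch is at most `2·m·V`,
where `V` is the cumulative temporal variation of the cost sequences over the batch. -/
theorem per_time_gap_le_variation
    (N : ℕ) (hN : 1 ≤ N) (m : ℝ) (hm : 0 < m)
    (μ : ℕ → ℝ) (hμ : ∀ i < N, μ i ∈ Set.Icc (0 : ℝ) m)
    (τ τ' : ℕ) (hττ' : τ ≤ τ')
    (c : ℕ → ℕ → ℝ) (hc : ∀ i < N, ∀ t ∈ Finset.Icc τ τ', 0 ≤ c i t)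
    (V : ℝ)
    (hV : V = ∑ t ∈ Finset.Ico τ τ',
        (Finset.range N).sup' (by simp; omega) (fun i => |c i (t + 1) - c i t|))
    (I : ℕ) (hI : I < N)
    (hopt : ∑ t ∈ Finset.Icc τ τ', μ I * c I t
        = (Finset.range N).sup' (by simp; omega)
            (fun i => ∑ t ∈ Finset.Icc τ τ', μ i * c i t)) :
    ∀ t ∈ Finset.Icc τ τ', ∀ i < N,
      μ i * c i t - μ I * c I t ≤ 2 * m * V := by
  intro t ht i hi
  have hne : (Finset.range N).Nonempty := by simp; omega
  have key : ∀ j, j < N → ∀ s ∈ Finset.Icc τ τ', ∀ u ∈ Finset.Icc τ τ',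
      |c j u - c j s| ≤ V := by
    have mono : ∀ s u, τ ≤ s → s ≤ u → u ≤ τ' → ∀ j, j < N → |c j u - c j s| ≤ V := by
      intro s u hs hsu hu j hj
      have h1 : c j u - c j s = ∑ x ∈ Finset.Ico s u, (c j (x + 1) - c j x) := by
        rw [Finset.sum_Ico_eq_sub _ hsu, Finset.sum_range_sub (fun x => c j x),
          Finset.sum_range_sub (fun x => c j x)]
        ring
      rw [h1]
      calc |∑ x ∈ Finset.Ico s u, (c j (x + 1) - c j x)|
          ≤ ∑ x ∈ Finset.Ico s u, |c j (x + 1) - c j x| :=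
            Finset.abs_sum_le_sum_abs _ _
        _ ≤ ∑ x ∈ Finset.Ico s u,
              (Finset.range N).sup' hne (fun j => |c j (x + 1) - c j x|) :=
            Finset.sum_le_sum (fun x _ => Finset.le_sup' (fun j => |c j (x + 1) - c j x|) (Finset.mem_range.2 hj))
        _ ≤ ∑ x ∈ Finset.Ico τ τ',
              (Finset.range N).sup' hne (fun j => |c j (x + 1) - c j x|) :=
            Finset.sum_le_sum_of_subset_of_nonneg (Finset.Ico_subset_Ico hs hu)
              (fun x _ _ => le_trans (abs_nonneg (c 0 (x+1) - c 0 x))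
                (Finset.le_sup' (fun j => |c j (x + 1) - c j x|)
                  (Finset.mem_range.2 (by omega : 0 < N))))
        _ = V := hV.symm
    intro j hj s hsmem u humem
    have hs := Finset.mem_Icc.1 hsmem
    have hu := Finset.mem_Icc.1 humem
    rcases le_total s u with h | h
    · exact mono s u hs.1 h hu.2 j hj
    · rw [abs_sub_comm]; exact mono u s hu.1 h hs.2 j hj
  have hVnn : 0 ≤ V := by
    have := key I hI t ht t ht
    simpa using this
  have hsum : ∑ s ∈ Finset.Icc τ τ', μ i * c i s
      ≤ ∑ s ∈ Finset.Icc τ τ', μ I * c I s := by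
    rw [hopt]
    exact Finset.le_sup' (fun i => ∑ t ∈ Finset.Icc τ τ', μ i * c i t) (Finset.mem_range.2 hi)
  obtain ⟨s, hs, hle⟩ := Finset.exists_le_of_sum_le
    ⟨τ, Finset.mem_Icc.2 ⟨le_refl τ, hττ'⟩⟩ hsum
  have hμi := hμ i hi
  have hμI := hμ I hI
  have b1 : μ i * c i t - μ i * c i s ≤ m * V := by
    have h : μ i * c i t - μ i * c i s = μ i * (c i t - c i s) := by ring
    rw [h]
    calc μ i * (c i t - c i s) ≤ μ i * |c i t - c i s| :=
          mul_le_mul_of_nonneg_left (le_abs_self _) hμi.1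
      _ ≤ m * V := mul_le_mul hμi.2 (key i hi s hs t ht) (abs_nonneg _) hm.le
  have b2 : μ I * c I s - μ I * c I t ≤ m * V := by
    have h : μ I * c I s - μ I * c I t = μ I * (c I s - c I t) := by ring
    rw [h]
    calc μ I * (c I s - c I t) ≤ μ I * |c I s - c I t| :=
          mul_le_mul_of_nonneg_left (le_abs_self _) hμI.1
      _ ≤ m * V := mul_le_mul hμI.2 (key I hI t ht s hs) (abs_nonneg _) hm.le
  linarith
end

section
/- Let N ≥ 2, T ≥ 1 and Δ ≥ 1 be integers, and partition {1,…,T} into ⌈T/Δ⌉ batches, batch b being {(b−1)Δ+1, …, min(bΔ, T)}. Let m > 0 be real, μ_i ∈ [0, m] for i ∈ {1,…,N}, c_{i,t} ≥ 0 for i ∈ {1,…,N}, t ∈ {1,…,T}, and let V = Σ_{t=1}^{T−1} max_{1≤i≤N} |c_{i,t+1} − c_{i,t}|. Let p_t(i) ≥ 0 with Σ_{i=1}^N p_t(i) = 1 for each t, and assume that for every batch b: max_{1≤i≤N} Σ_{t∈batch b} μ_i·c_{i,t} − Σ_{t∈batch b} Σ_{i=1}^N p_t(i)·μ_i·c_{i,t}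 ≤ 2√2·√(Δ·ln N). Then Σ_{t=1}^T max_{1≤i≤N} μ_i·c_{i,t} − Σ_{t=1}^T Σ_{i=1}^N p_t(i)·μ_i·c_{i,t} ≤ 2·Δ·m·V + (T/Δ + 1)·2√2·√(Δ·ln N). -/
open Finset

private lemma tele_abs (f : ℕ → ℝ) {s t : ℕ} (h : s ≤ t) :
    |f t - f s| ≤ ∑ u ∈ Finset.Ico s t, |f (u + 1) - f u| := by
  have key : f t - f s = ∑ u ∈ Finset.Ico s t, (f (u + 1) - f u) := by
    rw [Finset.sum_Ico_eq_sub _ h, Finset.sum_range_sub, Finset.sum_range_sub]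
    ring
  rw [key]
  exact Finset.abs_sum_le_sum_abs _ _

private lemma batch_gap (N Δ : ℕ) (hN : (Finset.range N).Nonempty)
    (m : ℝ) (hm : 0 ≤ m)
    (μ : ℕ → ℝ) (hμ0 : ∀ i < N, 0 ≤ μ i) (hμm : ∀ i < N, μ i ≤ m)
    (c : ℕ → ℕ → ℝ) (a e : ℕ) (hae : a < e) (hlen : e ≤ a + Δ) :
    ∑ t ∈ Finset.Ico a e, (Finset.range N).sup' hN (fun i => μ i * c i t)
      ≤ (Finset.range N).sup' hN (fun i => ∑ t ∈ Finset.Ico a e, μ i * c i t)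
        + (Δ : ℝ) * m *
          ∑ u ∈ Finset.Ico a (e - 1),
            (Finset.range N).sup' hN (fun i => |c i (u + 1) - c i u|) := by
  obtain ⟨j0, hj0⟩ := Finset.Nonempty.exists_mem hN
  set W : ℝ := ∑ u ∈ Finset.Ico a (e - 1),
      (Finset.range N).sup' hN (fun i => |c i (u + 1) - c i u|) with hWdef
  have hsupnn : ∀ u : ℕ, (0:ℝ) ≤ (Finset.range N).sup' hN (fun i => |c i (u + 1) - c i u|) :=
    fun u => le_trans (abs_nonneg (c j0 (u + 1) - c j0 u))
      (Finset.le_sup' (fun i => |c i (u + 1) - c i u|) hj0)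
  have hW0 : 0 ≤ W := Finset.sum_nonneg fun u _ => hsupnn u
  have hvar : ∀ i ∈ Finset.range N, ∀ s ∈ Finset.Ico a e, ∀ t ∈ Finset.Ico a e,
      |c i t - c i s| ≤ W := by
    intro i hi s hs t ht
    simp only [Finset.mem_Ico] at hs ht
    have main : ∀ s t : ℕ, a ≤ s → s ≤ t → t < e → |c i t - c i s| ≤ W := by
      intro s t h1 h2 h3
      calc |c i t - c i s| ≤ ∑ u ∈ Finset.Ico s t, |c i (u + 1) - c i u| := tele_abs _ h2
        _ ≤ ∑ u ∈ Finset.Ico s t,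
              (Finset.range N).sup' hN (fun i => |c i (u + 1) - c i u|) :=
            Finset.sum_le_sum fun u _ => Finset.le_sup' (fun j => |c j (u + 1) - c j u|) hi
        _ ≤ W := Finset.sum_le_sum_of_subset_of_nonneg
            (by intro u hu; simp only [Finset.mem_Ico] at *; omega)
            (fun u _ _ => hsupnn u)
    rcases le_total s t with h | h
    · exact main s t hs.1 h ht.2
    · rw [abs_sub_comm]; exact main t s ht.1 h hs.2
  obtain ⟨t0, ht0, ht0max⟩ := Finset.exists_max_image (Finset.Ico a e)
      (fun t => (Finset.range N).sup' hN (fun i => μ i * c i t))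
      ⟨a, Finset.mem_Ico.mpr ⟨le_refl a, hae⟩⟩
  obtain ⟨i0, hi0, hieq⟩ := Finset.exists_mem_eq_sup' hN (fun i => μ i * c i t0)
  have hi0N : i0 < N := Finset.mem_range.mp hi0
  have hstep : ∀ t ∈ Finset.Ico a e,
      (Finset.range N).sup' hN (fun i => μ i * c i t) ≤ μ i0 * c i0 t + m * W := by
    intro t ht
    have h1 := ht0max t ht
    rw [hieq] at h1
    have h3 : μ i0 * (c i0 t0 - c i0 t) ≤ m * W := by
      calc μ i0 * (c i0 t0 - c i0 t) ≤ μ i0 * |c i0 t0 - c i0 t| :=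
            mul_le_mul_of_nonneg_left (le_abs_self _) (hμ0 i0 hi0N)
        _ ≤ m * W := mul_le_mul (hμm i0 hi0N) (hvar i0 hi0 t ht t0 ht0) (abs_nonneg _) hm
    nlinarith [h1, h3]
  have hcard : ((Finset.Ico a e).card : ℝ) ≤ (Δ : ℝ) := by
    rw [Nat.card_Ico]
    have h : e - a ≤ Δ := by omega
    exact_mod_cast h
  calc ∑ t ∈ Finset.Ico a e, (Finset.range N).sup' hN (fun i => μ i * c i t)
      ≤ ∑ t ∈ Finset.Ico a e, (μ i0 * c i0 t + m * W) := Finset.sum_le_sum hstep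
    _ = (∑ t ∈ Finset.Ico a e, μ i0 * c i0 t) + ((Finset.Ico a e).card : ℝ) * (m * W) := by
        rw [Finset.sum_add_distrib, Finset.sum_const, nsmul_eq_mul]
    _ ≤ (Finset.range N).sup' hN (fun i => ∑ t ∈ Finset.Ico a e, μ i * c i t)
          + (Δ : ℝ) * m * W := by
        have h1 : (∑ t ∈ Finset.Ico a e, μ i0 * c i0 t)
            ≤ (Finset.range N).sup' hN (fun i => ∑ t ∈ Finset.Ico a e, μ i * c i t) :=
          Finset.le_sup' (fun i => ∑ t ∈ Finset.Ico a e, μ i * c i t) hi0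
        have h2 : ((Finset.Ico a e).card : ℝ) * (m * W) ≤ (Δ : ℝ) * (m * W) :=
          mul_le_mul_of_nonneg_right hcard (mul_nonneg hm hW0)
        nlinarith [h1, h2]

/-- Deterministic core of Lemma 1: if on each batch of length at most `Δ` the randomized
action rule `p` enjoys the Hedge guarantee against the best single action of the batch,
then against the nonstationary benchmark `max_i μ_i c_{i,t}` the total regret is at most
`2ΔmV + (T/Δ + 1)·2√2·√(Δ ln N)`, where `V` is the cumulative temporal variation. -/
theorem batched_hedge_regret_bound
    (N T Δ : ℕ) (hN : 2 ≤ N) (hT : 1 ≤ T) (hΔ : 1 ≤ Δ)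
    (m : ℝ) (hm : 0 < m)
    (μ : ℕ → ℝ) (hμ : ∀ i < N, μ i ∈ Set.Icc (0 : ℝ) m)
    (c : ℕ → ℕ → ℝ) (hc : ∀ i < N, ∀ t < T, 0 ≤ c i t)
    (V : ℝ)
    (hV : V = ∑ t ∈ Finset.range (T - 1),
        (Finset.range N).sup' (by simp; omega) (fun i => |c i (t + 1) - c i t|))
    (p : ℕ → ℕ → ℝ)
    (hp_nonneg : ∀ t < T, ∀ i < N, 0 ≤ p t i)
    (hp_sum : ∀ t < T, ∑ i ∈ Finset.range N, p t i = 1)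
    (hbatch : ∀ b < (T + Δ - 1) / Δ,
        (Finset.range N).sup' (by simp; omega)
            (fun i => ∑ t ∈ Finset.Ico (b * Δ) (min ((b + 1) * Δ) T), μ i * c i t)
          - ∑ t ∈ Finset.Ico (b * Δ) (min ((b + 1) * Δ) T),
              ∑ i ∈ Finset.range N, p t i * (μ i * c i t)
          ≤ 2 * Real.sqrt 2 * Real.sqrt (Δ * Real.log N)) :
    ∑ t ∈ Finset.range T,
        (Finset.range N).sup' (by simp; omega) (fun i => μ i * c i t)
      - ∑ t ∈ Finset.range T, ∑ i ∈ Finset.range N, p t i * (μ i * c i t)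
      ≤ 2 * (Δ : ℝ) * m * V
        + ((T : ℝ) / (Δ : ℝ) + 1) * (2 * Real.sqrt 2) * Real.sqrt (Δ * Real.log N) := by
  have hNne : (Finset.range N).Nonempty := Finset.nonempty_range_iff.mpr (by omega)
  have hΔ0 : 0 < Δ := hΔ
  set B : ℕ := (T + Δ - 1) / Δ with hBdef
  set K : ℝ := 2 * Real.sqrt 2 * Real.sqrt (Δ * Real.log N) with hKdef
  have hK0 : 0 ≤ K := by
    apply mul_nonneg (mul_nonneg (by norm_num) (Real.sqrt_nonneg _)) (Real.sqrt_nonneg _)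
  set batch : ℕ → Finset ℕ := fun b => Finset.Ico (b * Δ) (min ((b + 1) * Δ) T) with hbatchdef
  -- batch endpoints facts
  have hend : ∀ b < B, b * Δ < min ((b + 1) * Δ) T ∧ min ((b + 1) * Δ) T ≤ b * Δ + Δ := by
    intro b hb
    have h1 : (b + 1) * Δ ≤ T + Δ - 1 := (Nat.le_div_iff_mul_le hΔ0).mp hb
    have h2 : (b + 1) * Δ = b * Δ + Δ := by ring
    omega
  -- cover
  have hcover : Finset.range T = (Finset.range B).biUnion batch := by
    ext t
    simp only [Finset.mem_range, Finset.mem_biUnion, hbatchdef, Finset.mem_Ico]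
    constructor
    · rintro ht
      refine ⟨t / Δ, ?_, Nat.div_mul_le_self t Δ, ?_⟩
      · have h1 : (t / Δ) * Δ ≤ t := Nat.div_mul_le_self t Δ
        have h2 : (t / Δ + 1) * Δ ≤ T + Δ - 1 := by
          have : (t / Δ + 1) * Δ = (t / Δ) * Δ + Δ := by ring
          omega
        have := (Nat.le_div_iff_mul_le hΔ0).mpr h2
        omega
      · have h3 : t < (t / Δ + 1) * Δ := (Nat.div_lt_iff_lt_mul hΔ0).mp (Nat.lt_succ_self _)
        omega
    · rintro ⟨b, hb, h1, h2⟩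
      omega
  -- disjointness
  have hdisj' : ∀ b b' : ℕ, b < b' → Disjoint (batch b) (batch b') := by
    intro b b' hbb'
    apply Finset.disjoint_left.mpr
    intro t ht ht'
    simp only [hbatchdef, Finset.mem_Ico] at ht ht'
    have : (b + 1) * Δ ≤ b' * Δ := Nat.mul_le_mul_right Δ hbb'
    omega
  have hdisj : Set.PairwiseDisjoint (↑(Finset.range B)) batch := by
    intro b _ b' _ hne
    rcases lt_or_gt_of_ne hne with h | h
    · exact hdisj' b b' h
    · exact (hdisj' b' b h).symm
  -- shorthand functions
  set g : ℕ → ℝ := fun t => (Finset.range N).sup' hNne (fun i => μ i * c i t) with hgdef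
  set q : ℕ → ℝ := fun t => ∑ i ∈ Finset.range N, p t i * (μ i * c i t) with hqdef
  set w : ℕ → ℝ := fun u => (Finset.range N).sup' hNne (fun i => |c i (u + 1) - c i u|) with hwdef
  have hw0 : ∀ u, 0 ≤ w u := by
    intro u
    simp only [hwdef]
    exact le_trans (abs_nonneg (c 0 (u + 1) - c 0 u))
      (Finset.le_sup' (fun i => |c i (u + 1) - c i u|) (Finset.mem_range.mpr (show 0 < N by omega)))
  set Vb : ℕ → ℝ := fun b => ∑ u ∈ Finset.Ico (b * Δ) (min ((b + 1) * Δ) T - 1), w u with hVbdef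
  have hVb0 : ∀ b, 0 ≤ Vb b := fun b => Finset.sum_nonneg fun u _ => hw0 u
  -- per-batch bound
  have hperb : ∀ b < B, (∑ t ∈ batch b, g t) - (∑ t ∈ batch b, q t)
      ≤ (Δ : ℝ) * m * Vb b + K := by
    intro b hb
    obtain ⟨hlt, hle⟩ := hend b hb
    have hgap := batch_gap N Δ hNne m hm.le μ (fun i hi => (hμ i hi).1) (fun i hi => (hμ i hi).2)
      c (b * Δ) (min ((b + 1) * Δ) T) hlt hle
    have hb2 := hbatch b hb
    have hgeq : (Finset.range N).sup' hNne
        (fun i => ∑ t ∈ Finset.Ico (b * Δ) (min ((b + 1) * Δ) T), μ i * c i t)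
        = (Finset.range N).sup' (by simp; omega)
        (fun i => ∑ t ∈ Finset.Ico (b * Δ) (min ((b + 1) * Δ) T), μ i * c i t) := rfl
    simp only [hbatchdef, hgdef, hqdef, hVbdef]
    linarith [hgap, hb2]
  -- decompose sums
  have hsum1 : ∑ t ∈ Finset.range T, g t = ∑ b ∈ Finset.range B, ∑ t ∈ batch b, g t := by
    rw [hcover, Finset.sum_biUnion hdisj]
  have hsum2 : ∑ t ∈ Finset.range T, q t = ∑ b ∈ Finset.range B, ∑ t ∈ batch b, q t := by
    rw [hcover, Finset.sum_biUnion hdisj]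
  -- sum of Vb ≤ V
  have hVsum : ∑ b ∈ Finset.range B, Vb b ≤ V := by
    set batch' : ℕ → Finset ℕ := fun b => Finset.Ico (b * Δ) (min ((b + 1) * Δ) T - 1)
      with hbatch'def
    have hsub : ∀ b, batch' b ⊆ batch b := by
      intro b u hu
      simp only [hbatch'def, hbatchdef, Finset.mem_Ico] at *
      omega
    have hdisj2 : Set.PairwiseDisjoint (↑(Finset.range B)) batch' := by
      intro b hbm b' hbm' hne
      exact Finset.disjoint_of_subset_left (hsub b)
        (Finset.disjoint_of_subset_right (hsub b') (hdisj hbm hbm' hne))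
    have : ∑ b ∈ Finset.range B, Vb b = ∑ u ∈ (Finset.range B).biUnion batch', w u := by
      rw [Finset.sum_biUnion hdisj2]
    rw [this, hV]
    apply Finset.sum_le_sum_of_subset_of_nonneg
    · intro u hu
      simp only [Finset.mem_biUnion, hbatch'def, Finset.mem_Ico, Finset.mem_range] at *
      obtain ⟨b, hb, h1, h2⟩ := hu
      omega
    · intro u _ _
      exact hw0 u
  -- B ≤ T/Δ + 1 over ℝ
  have hΔR : (0:ℝ) < (Δ : ℝ) := by exact_mod_cast hΔ0
  have hBle : (B : ℝ) ≤ (T : ℝ) / (Δ : ℝ) + 1 := by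
    have h1 : (B : ℝ) ≤ ((T + Δ - 1 : ℕ) : ℝ) / (Δ : ℝ) := Nat.cast_div_le
    have h2 : ((T + Δ - 1 : ℕ) : ℝ) = (T : ℝ) + (Δ : ℝ) - 1 := by
      push_cast [Nat.cast_sub (by omega : 1 ≤ T + Δ)]; ring
    rw [h2] at h1
    have h3 : ((T : ℝ) + (Δ : ℝ) - 1) / (Δ : ℝ) ≤ (T : ℝ) / (Δ : ℝ) + 1 := by
      rw [div_le_iff₀ hΔR]
      have : ((T : ℝ) / (Δ : ℝ) + 1) * (Δ : ℝ) = (T : ℝ) + (Δ : ℝ) := by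
        field_simp
      rw [this]; linarith
    linarith
  -- combine
  have hV0 : 0 ≤ V := by
    rw [hV]; exact Finset.sum_nonneg fun u _ => hw0 u
  calc ∑ t ∈ Finset.range T, g t - ∑ t ∈ Finset.range T, q t
      = ∑ b ∈ Finset.range B, ((∑ t ∈ batch b, g t) - (∑ t ∈ batch b, q t)) := by
        rw [hsum1, hsum2, Finset.sum_sub_distrib]
    _ ≤ ∑ b ∈ Finset.range B, ((Δ : ℝ) * m * Vb b + K) :=
        Finset.sum_le_sum fun b hb => hperb b (Finset.mem_range.mp hb)
    _ = (Δ : ℝ) * m * (∑ b ∈ Finset.range B, Vb b) + (B : ℝ) * K := by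
        rw [Finset.sum_add_distrib, Finset.sum_const, nsmul_eq_mul, ← Finset.mul_sum, Finset.card_range]
    _ ≤ 2 * (Δ : ℝ) * m * V + ((T : ℝ) / (Δ : ℝ) + 1) * K := by
        have h1 : (Δ : ℝ) * m * (∑ b ∈ Finset.range B, Vb b) ≤ (Δ : ℝ) * m * V :=
          mul_le_mul_of_nonneg_left hVsum (mul_nonneg hΔR.le hm.le)
        have h2 : (Δ : ℝ) * m * V ≤ 2 * (Δ : ℝ) * m * V := by
          nlinarith [mul_nonneg (mul_nonneg hΔR.le hm.le) hV0]
        have h3 : (B : ℝ) * K ≤ ((T : ℝ) / (Δ : ℝ) + 1) * K :=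
          mul_le_mul_of_nonneg_right hBle hK0
        linarith
    _ = 2 * (Δ : ℝ) * m * V
        + ((T : ℝ) / (Δ : ℝ) + 1) * (2 * Real.sqrt 2) * Real.sqrt (Δ * Real.log N) := by
        rw [hKdef]; ring
end
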